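/- A metric space X satisfies condition (C) if and only if the quotient algebra B_h(X)/B_0(X) contains no non-trivial idempotent element; that is, if and only if there is no bounded slowly oscillating function f : X → ℂ such that f² − f tends to zero at infinity while neither f nor 1 − f tends to zero at infinity. (Equivalently, the Higson corona of X is topologically connected.) -/

import Mathlib

/-!
If `f ∈ B_h(X)` is idempotent modulo `B_0(X)`, then `f` differs by a function tending to zero at
infinity from the indicator of `A = {‖f - 1‖ ≤ ‖f‖}`, because `‖f - 1_A‖² ≤ ‖f² - f‖` pointwise.
So nontrivial idempotents amount to sets `A` with `1_A` slowly oscillating (for every `R` only a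
bounded part of `A` is `R`-close to `Aᶜ`) and with `A`, `Aᶜ` both unbounded. A coarse map
`X → Y + Z` produces such a set, the preimage of `Y`, and it factors through `Y` or `Z` exactly
when that set or its complement is bounded. Conversely such a set `A` produces the coarse map
`X → X + X` sending `A` to the left and `Aᶜ` to the right copy, which factors through neither.
-/

open Bornology

def Bornologous {X Y : Type*} [PseudoMetricSpace X] [PseudoMetricSpace Y] (f : X → Y) : Prop :=
  ∀ R : ℝ, 0 < R → ∃ S : ℝ, 0 < S ∧ ∀ x x' : X, dist x x' ≤ R → dist (f x) (f x') ≤ S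

def ProperMap {X Y : Type*} [PseudoMetricSpace X] [PseudoMetricSpace Y] (f : X → Y) : Prop :=
  ∀ B : Set Y, IsBounded B → IsBounded (f ⁻¹' B)

def IsCoarse {X Y : Type*} [PseudoMetricSpace X] [PseudoMetricSpace Y] (f : X → Y) : Prop :=
  Bornologous f ∧ ProperMap f

def Close {X Y : Type*} [PseudoMetricSpace Y] (f g : X → Y) : Prop :=
  ∃ R : ℝ, 0 < R ∧ ∀ x : X, dist (f x) (g x) ≤ R

def coprodDist {X Y : Type*} [MetricSpace X] [MetricSpace Y] (x₀ : X) (y₀ : Y) :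
    X ⊕ Y → X ⊕ Y → ℝ
  | Sum.inl a, Sum.inl b => dist a b
  | Sum.inl a, Sum.inr b => dist a x₀ + 1 + dist y₀ b
  | Sum.inr a, Sum.inl b => dist b x₀ + 1 + dist y₀ a
  | Sum.inr a, Sum.inr b => dist a b

noncomputable def coprodMetric {X Y : Type*} [MetricSpace X] [MetricSpace Y]
    (x₀ : X) (y₀ : Y) : MetricSpace (X ⊕ Y) where
  dist := coprodDist x₀ y₀
  dist_self := by rintro (a | a) <;> simp [coprodDist]
  dist_comm := fun p q => by
    match p, q with
    | Sum.inl a, Sum.inl b => exact dist_comm a b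
    | Sum.inl a, Sum.inr b => rfl
    | Sum.inr a, Sum.inl b => rfl
    | Sum.inr a, Sum.inr b => exact dist_comm a b
  dist_triangle := fun p q r => by
    match p, q, r with
    | Sum.inl a, Sum.inl b, Sum.inl c => exact dist_triangle a b c
    | Sum.inl a, Sum.inl b, Sum.inr c =>
      show dist a x₀ + 1 + dist y₀ c ≤ dist a b + (dist b x₀ + 1 + dist y₀ c)
      have := dist_triangle a b x₀; linarith
    | Sum.inl a, Sum.inr b, Sum.inl c =>
      show dist a c ≤ (dist a x₀ + 1 + dist y₀ b) + (dist c x₀ + 1 + dist y₀ b)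
      have h1 := dist_triangle a x₀ c
      have h2 : dist x₀ c = dist c x₀ := dist_comm _ _
      have h3 := dist_nonneg (x := y₀) (y := b)
      linarith
    | Sum.inl a, Sum.inr b, Sum.inr c =>
      show dist a x₀ + 1 + dist y₀ c ≤ (dist a x₀ + 1 + dist y₀ b) + dist b c
      have := dist_triangle y₀ b c; linarith
    | Sum.inr a, Sum.inl b, Sum.inl c =>
      show dist c x₀ + 1 + dist y₀ a ≤ (dist b x₀ + 1 + dist y₀ a) + dist b c
      have h1 := dist_triangle c b x₀
      have h2 : dist c b = dist b c := dist_comm _ _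
      linarith
    | Sum.inr a, Sum.inl b, Sum.inr c =>
      show dist a c ≤ (dist b x₀ + 1 + dist y₀ a) + (dist b x₀ + 1 + dist y₀ c)
      have h1 := dist_triangle a y₀ c
      have h2 : dist a y₀ = dist y₀ a := dist_comm _ _
      have h3 := dist_nonneg (x := b) (y := x₀)
      linarith
    | Sum.inr a, Sum.inr b, Sum.inl c =>
      show dist c x₀ + 1 + dist y₀ a ≤ dist a b + (dist c x₀ + 1 + dist y₀ b)
      have h1 := dist_triangle y₀ b a
      have h2 : dist b a = dist a b := dist_comm _ _
      linarith
    | Sum.inr a, Sum.inr b, Sum.inr c => exact dist_triangle a b c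
  eq_of_dist_eq_zero := fun {p q} h => by
    match p, q, h with
    | Sum.inl a, Sum.inl b, h => exact congrArg Sum.inl (eq_of_dist_eq_zero h)
    | Sum.inl a, Sum.inr b, h =>
      exfalso
      have h1 := dist_nonneg (x := a) (y := x₀)
      have h2 := dist_nonneg (x := y₀) (y := b)
      have h' : dist a x₀ + 1 + dist y₀ b = 0 := h
      linarith
    | Sum.inr a, Sum.inl b, h =>
      exfalso
      have h1 := dist_nonneg (x := b) (y := x₀)
      have h2 := dist_nonneg (x := y₀) (y := a)
      have h' : dist b x₀ + 1 + dist y₀ a = 0 := h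
      linarith
    | Sum.inr a, Sum.inr b, h => exact congrArg Sum.inr (eq_of_dist_eq_zero h)

/-- Condition (C): every coarse map into a coarse coproduct factors, up to closeness,
through one of the coproduct injections. -/
def CondC (X : Type u) [MetricSpace X] : Prop :=
  ∀ (Y Z : Type u) [MetricSpace Y] [MetricSpace Z] (y₀ : Y) (z₀ : Z) (f : X → Y ⊕ Z),
    letI := coprodMetric y₀ z₀
    IsCoarse f →
      (∃ g : X → Y, IsCoarse g ∧ Close (Sum.inl ∘ g) f) ∨
      (∃ h : X → Z, IsCoarse h ∧ Close (Sum.inr ∘ h) f)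

def IsBoundedFn {W : Type*} (f : W → ℂ) : Prop :=
  ∃ C : ℝ, ∀ x : W, ‖f x‖ ≤ C

/-- A bounded function to `ℂ` is *slowly oscillating* if for all `ε > 0` and `R > 0` there is a
bounded set outside of which points at distance at most `R` have values at distance at most `ε`. -/
def SlowlyOscillating {W : Type*} [PseudoMetricSpace W] (f : W → ℂ) : Prop :=
  ∀ ε : ℝ, 0 < ε → ∀ R : ℝ, 0 < R → ∃ B : Set W, IsBounded B ∧
    ∀ x ∉ B, ∀ x' ∉ B, dist x x' ≤ R → ‖f x - f x'‖ ≤ ε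

/-- A function *tends to zero at infinity* if outside of suitable bounded sets it is
uniformly small. -/
def TendsToZeroAtInfinity {W : Type*} [PseudoMetricSpace W] (f : W → ℂ) : Prop :=
  ∀ ε : ℝ, 0 < ε → ∃ B : Set W, IsBounded B ∧ ∀ x ∉ B, ‖f x‖ ≤ ε

/-- Membership in `B_h(W)`: bounded and slowly oscillating. -/
def MemBh {W : Type*} [PseudoMetricSpace W] (f : W → ℂ) : Prop :=
  IsBoundedFn f ∧ SlowlyOscillating f

/-- Membership in `B_0(W)`: bounded and tending to zero at infinity. -/
def MemB0 {W : Type*} [PseudoMetricSpace W] (f : W → ℂ) : Prop :=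
  IsBoundedFn f ∧ TendsToZeroAtInfinity f

section Coarse

variable {X Y V : Type*} [PseudoMetricSpace Y] [PseudoMetricSpace V]

theorem Close.symm {f g : X → Y} (h : Close f g) : Close g f := by
  obtain ⟨R, hR, hfg⟩ := h
  exact ⟨R, hR, fun x => dist_comm (f x) (g x) ▸ hfg x⟩

theorem close_of_eqOn_compl {f g : X → Y} {B : Set X} (hf : IsBounded (f '' B))
    (hg : IsBounded (g '' B)) (hfg : Set.EqOn f g Bᶜ) : Close f g := by
  obtain ⟨C, hC⟩ := Metric.isBounded_iff.1 (hf.union hg)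
  refine ⟨max C 1, by positivity, fun x => ?_⟩
  by_cases hx : x ∈ B
  · exact (hC (Or.inl ⟨x, hx, rfl⟩) (Or.inr ⟨x, hx, rfl⟩)).trans (le_max_left _ _)
  · rw [hfg hx, dist_self]
    positivity

variable [PseudoMetricSpace X]

theorem Bornologous.isBounded_image {f : X → Y} (hf : Bornologous f) {B : Set X}
    (hB : IsBounded B) : IsBounded (f '' B) := by
  obtain ⟨C, hC⟩ := Metric.isBounded_iff.1 hB
  obtain ⟨S, -, hS⟩ := hf (max C 1) (by positivity)
  refine Metric.isBounded_iff.2 ⟨S, ?_⟩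
  rintro _ ⟨x, hx, rfl⟩ _ ⟨x', hx', rfl⟩
  exact hS x x' ((hC hx hx').trans (le_max_left _ _))

theorem Bornologous.of_close {f g : X → Y} (hf : Bornologous f) (hfg : Close f g) :
    Bornologous g := by
  obtain ⟨R', hR', hfg⟩ := hfg
  intro R hR
  obtain ⟨S, hS, hSf⟩ := hf R hR
  refine ⟨R' + S + R', by positivity, fun x x' hxx' => ?_⟩
  calc dist (g x) (g x') ≤ dist (g x) (f x) + dist (f x) (f x') + dist (f x') (g x') :=
        dist_triangle4 _ _ _ _
    _ ≤ R' + S + R' := by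
        gcongr
        · exact dist_comm (g x) (f x) ▸ hfg x
        · exact hSf x x' hxx'
        · exact hfg x'

theorem ProperMap.of_close {f g : X → Y} (hf : ProperMap f) (hfg : Close f g) :
    ProperMap g := by
  obtain ⟨R, -, hfg⟩ := hfg
  intro B hB
  refine (hf _ (hB.thickening (δ := R + 1))).subset fun x hx => ?_
  exact Metric.mem_thickening_iff.2 ⟨g x, hx, (hfg x).trans_lt (lt_add_one R)⟩

theorem IsCoarse.of_close {f g : X → Y} (hf : IsCoarse f) (hfg : Close f g) : IsCoarse g :=
  ⟨hf.1.of_close hfg, hf.2.of_close hfg⟩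

theorem IsCoarse.of_isometry_comp {ι : V → Y} (hι : Isometry ι) {g : X → V}
    (hg : IsCoarse (ι ∘ g)) : IsCoarse g := by
  refine ⟨fun R hR => ?_, fun B hB => ?_⟩
  · obtain ⟨S, hS, hSg⟩ := hg.1 R hR
    exact ⟨S, hS, fun x x' hxx' => hι.dist_eq (g x) (g x') ▸ hSg x x' hxx'⟩
  · exact (hg.2 _ (hι.lipschitz.isBounded_image hB)).subset
      fun x hx => Set.mem_image_of_mem ι hx

theorem IsCoarse.factor_of_eqOn_compl {f : X → Y} (hf : IsCoarse f) {ι : V → Y}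
    (hι : Isometry ι) {g : X → V} {B : Set X} (hB : IsBounded B) (hg : IsBounded (g '' B))
    (hfg : Set.EqOn (ι ∘ g) f Bᶜ) : IsCoarse g ∧ Close (ι ∘ g) f := by
  have hclose : Close (ι ∘ g) f := by
    refine close_of_eqOn_compl ?_ (hf.1.isBounded_image hB) hfg
    rw [Set.image_comp]
    exact hι.lipschitz.isBounded_image hg
  exact ⟨(hf.of_close hclose.symm).of_isometry_comp hι, hclose⟩

end Coarse

section Coproduct

variable {Y Z : Type*} [MetricSpace Y] [MetricSpace Z]

theorem isometry_inl_coprodMetric (y₀ : Y) (z₀ : Z) :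
    letI := coprodMetric y₀ z₀
    Isometry (Sum.inl : Y → Y ⊕ Z) :=
  letI := coprodMetric y₀ z₀
  Isometry.of_dist_eq fun _ _ => rfl

theorem isometry_inr_coprodMetric (y₀ : Y) (z₀ : Z) :
    letI := coprodMetric y₀ z₀
    Isometry (Sum.inr : Z → Y ⊕ Z) :=
  letI := coprodMetric y₀ z₀
  Isometry.of_dist_eq fun _ _ => rfl

theorem coprodMetric_dist_inl_le {y₀ : Y} {z₀ : Z} {p q : Y ⊕ Z}
    (h : p.isLeft ≠ q.isLeft) :
    letI := coprodMetric y₀ z₀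
    dist p (Sum.inl y₀) ≤ dist p q := by
  rcases p with a | a <;> rcases q with b | b <;> simp only [Sum.isLeft, ne_eq,
    not_true_eq_false] at h <;>
    change coprodDist y₀ z₀ _ _ ≤ coprodDist y₀ z₀ _ _ <;> simp only [coprodDist, dist_self]
  · linarith [dist_nonneg (x := z₀) (y := b)]
  · linarith [dist_nonneg (x := b) (y := y₀)]

end Coproduct

section Functions

variable {X : Type*} [PseudoMetricSpace X]

theorem TendsToZeroAtInfinity.add {f g : X → ℂ} (hf : TendsToZeroAtInfinity f)
    (hg : TendsToZeroAtInfinity g) : TendsToZeroAtInfinity (f + g) := by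
  intro ε hε
  obtain ⟨B, hB, hfB⟩ := hf (ε / 2) (by positivity)
  obtain ⟨B', hB', hgB'⟩ := hg (ε / 2) (by positivity)
  refine ⟨B ∪ B', hB.union hB', fun x hx => ?_⟩
  rw [Set.mem_union, not_or] at hx
  calc ‖f x + g x‖ ≤ ‖f x‖ + ‖g x‖ := norm_add_le _ _
    _ ≤ ε / 2 + ε / 2 := add_le_add (hfB x hx.1) (hgB' x hx.2)
    _ = ε := add_halves ε

theorem TendsToZeroAtInfinity.neg {f : X → ℂ} (hf : TendsToZeroAtInfinity f) :
    TendsToZeroAtInfinity (-f) := by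
  simpa only [TendsToZeroAtInfinity, Pi.neg_apply, norm_neg] using hf

theorem TendsToZeroAtInfinity.sub {f g : X → ℂ} (hf : TendsToZeroAtInfinity f)
    (hg : TendsToZeroAtInfinity g) : TendsToZeroAtInfinity (f - g) :=
  sub_eq_add_neg f g ▸ hf.add hg.neg

theorem SlowlyOscillating.of_tendsToZero_sub {f g : X → ℂ} (hf : SlowlyOscillating f)
    (hfg : TendsToZeroAtInfinity (f - g)) : SlowlyOscillating g := by
  intro ε hε R hR
  obtain ⟨B, hB, hfB⟩ := hf (ε / 3) (by positivity) R hR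
  obtain ⟨B', hB', hfgB'⟩ := hfg (ε / 3) (by positivity)
  refine ⟨B ∪ B', hB.union hB', fun x hx x' hx' hxx' => ?_⟩
  rw [Set.mem_union, not_or] at hx hx'
  calc ‖g x - g x'‖ = ‖-(f - g) x + (f x - f x') + (f - g) x'‖ := by
        simp only [Pi.sub_apply]; ring_nf
    _ ≤ ‖-(f - g) x‖ + ‖f x - f x'‖ + ‖(f - g) x'‖ := norm_add₃_le
    _ ≤ ε / 3 + ε / 3 + ε / 3 := by
        rw [norm_neg]
        gcongr
        exacts [hfgB' x hx.2, hfB x hx.1 x' hx'.1 hxx', hfgB' x' hx'.2]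
    _ = ε := by ring

theorem tendsToZeroAtInfinity_indicator_one_iff {A : Set X} :
    TendsToZeroAtInfinity (A.indicator (1 : X → ℂ)) ↔ IsBounded A := by
  refine ⟨fun h => ?_, fun hA ε hε => ⟨A, hA, fun x hx => ?_⟩⟩
  · obtain ⟨B, hB, hAB⟩ := h (1 / 2) (by norm_num)
    refine hB.subset fun x hxA => by_contra fun hxB => ?_
    have := hAB x hxB
    norm_num [Set.indicator_of_mem hxA] at this
  · simpa [Set.indicator_of_notMem hx] using hε.le

theorem slowlyOscillating_indicator_one_iff {A : Set X} :
    SlowlyOscillating (A.indicator (1 : X → ℂ)) ↔ ∀ R : ℝ, 0 < R → ∃ B : Set X, IsBounded B ∧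
      ∀ x ∉ B, ∀ x' ∉ B, dist x x' ≤ R → (x ∈ A ↔ x' ∈ A) := by
  refine ⟨fun h R hR => ?_, fun h ε hε R hR => ?_⟩
  · obtain ⟨B, hB, hAB⟩ := h (1 / 2) (by norm_num) R hR
    refine ⟨B, hB, fun x hx x' hx' hxx' => ?_⟩
    have := hAB x hx x' hx' hxx'
    by_cases hxA : x ∈ A <;> by_cases hxA' : x' ∈ A <;> simp_all <;> norm_num at this
  · obtain ⟨B, hB, hAB⟩ := h R hR
    refine ⟨B, hB, fun x hx x' hx' hxx' => ?_⟩
    have := hAB x hx x' hx' hxx'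
    by_cases hxA : x ∈ A
    · simp [hxA, this.1 hxA, hε.le]
    · simp [hxA, mt this.2 hxA, hε.le]

end Functions

section Idempotents

variable {X : Type*}

theorem norm_sub_indicator_sq_le (f : X → ℂ) (x : X) :
    ‖f x - {y | ‖f y - 1‖ ≤ ‖f y‖}.indicator 1 x‖ ^ 2 ≤ ‖f x * f x - f x‖ := by
  have hfactor : f x * f x - f x = f x * (f x - 1) := by ring
  rw [hfactor, norm_mul, sq]
  by_cases hx : x ∈ {y | ‖f y - 1‖ ≤ ‖f y‖}
  · rw [Set.indicator_of_mem hx, Pi.one_apply]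
    exact mul_le_mul_of_nonneg_right hx (norm_nonneg _)
  · rw [Set.indicator_of_notMem hx, sub_zero]
    exact mul_le_mul_of_nonneg_left (not_le.1 hx).le (norm_nonneg _)

variable [PseudoMetricSpace X]

theorem TendsToZeroAtInfinity.sub_indicator {f : X → ℂ}
    (hf : TendsToZeroAtInfinity (f * f - f)) :
    TendsToZeroAtInfinity (f - {y | ‖f y - 1‖ ≤ ‖f y‖}.indicator 1) := by
  intro ε hε
  obtain ⟨B, hB, hfB⟩ := hf (ε ^ 2) (by positivity)
  refine ⟨B, hB, fun x hx => ?_⟩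
  rw [← pow_le_pow_iff_left₀ (norm_nonneg _) hε.le two_ne_zero]
  exact (norm_sub_indicator_sq_le f x).trans (hfB x hx)

theorem exists_nontrivial_idempotent_iff :
    (∃ f : X → ℂ, IsBoundedFn f ∧ SlowlyOscillating f ∧ TendsToZeroAtInfinity (f * f - f) ∧
        ¬ TendsToZeroAtInfinity f ∧ ¬ TendsToZeroAtInfinity (1 - f)) ↔
      ∃ A : Set X, SlowlyOscillating (A.indicator 1) ∧ ¬ IsBounded A ∧ ¬ IsBounded Aᶜ := by
  simp only [← tendsToZeroAtInfinity_indicator_one_iff, Set.indicator_compl]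
  constructor
  · rintro ⟨f, -, hso, hidem, hf, hf'⟩
    have hround := hidem.sub_indicator
    refine ⟨_, hso.of_tendsToZero_sub hround, fun h => hf ?_, fun h => hf' ?_⟩
    · simpa using h.add hround
    · simpa using h.sub hround
  · rintro ⟨A, hso, hA, hA'⟩
    refine ⟨A.indicator 1, ⟨1, fun x => ?_⟩, hso, fun ε hε => ⟨∅, isBounded_empty, fun x _ => ?_⟩,
      hA, hA'⟩
    · by_cases hx : x ∈ A <;> simp [hx]
    · by_cases hx : x ∈ A <;> simp [hx, hε.le]

end Idempotents

section CondC

variable {X : Type*}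

open Classical in
noncomputable def splitMap (A : Set X) (x : X) : X ⊕ X :=
  if x ∈ A then Sum.inl x else Sum.inr x

theorem splitMap_isLeft (A : Set X) (x : X) : (splitMap A x).isLeft = true ↔ x ∈ A := by
  unfold splitMap
  split_ifs with hx <;> simp [hx]

variable [MetricSpace X]

theorem dist_splitMap_of_mem_iff {A : Set X} (x₀ : X) {x x' : X} (h : x ∈ A ↔ x' ∈ A) :
    letI := coprodMetric x₀ x₀
    dist (splitMap A x) (splitMap A x') = dist x x' := by
  unfold splitMap
  by_cases hx : x ∈ A
  · rw [if_pos hx, if_pos (h.1 hx)]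
    rfl
  · rw [if_neg hx, if_neg (mt h.2 hx)]
    rfl

theorem dist_splitMap_inl_bounds (A : Set X) (x₀ x : X) :
    letI := coprodMetric x₀ x₀
    dist x x₀ ≤ dist (splitMap A x) (Sum.inl x₀) ∧
      dist (splitMap A x) (Sum.inl x₀) ≤ dist x x₀ + 1 := by
  unfold splitMap
  split_ifs
  · exact ⟨le_rfl, le_add_of_nonneg_right zero_le_one⟩
  · change dist x x₀ ≤ coprodDist x₀ x₀ _ _ ∧ coprodDist x₀ x₀ _ _ ≤ dist x x₀ + 1
    simp only [coprodDist, dist_self, zero_add, dist_comm x₀ x]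
    constructor <;> linarith

theorem isCoarse_splitMap {A : Set X} (x₀ : X) (hA : SlowlyOscillating (A.indicator 1)) :
    letI := coprodMetric x₀ x₀
    IsCoarse (splitMap A) := by
  let := coprodMetric x₀ x₀
  refine ⟨fun R hR => ?_, fun B hB => ?_⟩
  · obtain ⟨B, hB, hAB⟩ := slowlyOscillating_indicator_one_iff.1 hA R hR
    obtain ⟨r, hr⟩ := hB.subset_closedBall x₀
    refine ⟨2 * |r| + R + 2, by positivity, fun x x' hxx' => ?_⟩
    by_cases hfar : x ∉ B ∧ x' ∉ B
    · rw [dist_splitMap_of_mem_iff x₀ (hAB x hfar.1 x' hfar.2 hxx')]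
      linarith [abs_nonneg r]
    have hnear : dist x x₀ + dist x' x₀ ≤ 2 * r + R := by
      rcases not_and_or.1 hfar with hx | hx <;> rw [not_not] at hx
      · linarith [Metric.mem_closedBall.1 (hr hx), dist_triangle_left x' x₀ x]
      · linarith [Metric.mem_closedBall.1 (hr hx), dist_triangle x x' x₀]
    calc dist (splitMap A x) (splitMap A x')
        ≤ dist (splitMap A x) (Sum.inl x₀) + dist (splitMap A x') (Sum.inl x₀) :=
          dist_triangle_right _ _ _
      _ ≤ dist x x₀ + 1 + (dist x' x₀ + 1) :=
          add_le_add (dist_splitMap_inl_bounds A x₀ x).2 (dist_splitMap_inl_bounds A x₀ x').2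
      _ ≤ 2 * |r| + R + 2 := by linarith [le_abs_self r]
  · obtain ⟨r, hr⟩ := hB.subset_closedBall (Sum.inl x₀)
    exact Metric.isBounded_closedBall.subset fun x hx =>
      (dist_splitMap_inl_bounds A x₀ x).1.trans (hr hx)

end CondC

theorem CondC.isBounded_or_isBounded_compl {X : Type u} [MetricSpace X] (hC : CondC X)
    {A : Set X} (hA : SlowlyOscillating (A.indicator 1)) : IsBounded A ∨ IsBounded Aᶜ := by
  rcases isEmpty_or_nonempty X with hX | ⟨⟨x₀⟩⟩
  · exact Or.inl (A.eq_empty_of_isEmpty ▸ isBounded_empty)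
  let := coprodMetric x₀ x₀
  rcases hC X X x₀ x₀ (splitMap A) (isCoarse_splitMap x₀ hA) with
    ⟨g, -, R, -, hg⟩ | ⟨g, -, R, -, hg⟩
  · refine Or.inr ((Metric.isBounded_closedBall (x := x₀) (r := R)).subset fun x hx => ?_)
    have hside : (splitMap A x).isLeft ≠ (Sum.inl (g x) : X ⊕ X).isLeft := by
      simpa [splitMap_isLeft] using hx
    calc dist x x₀ ≤ dist (splitMap A x) (Sum.inl x₀) := (dist_splitMap_inl_bounds A x₀ x).1
      _ ≤ dist (splitMap A x) (Sum.inl (g x)) := coprodMetric_dist_inl_le hside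
      _ ≤ R := dist_comm (Sum.inl (g x)) (splitMap A x) ▸ hg x
  · refine Or.inl ((Metric.isBounded_closedBall (x := x₀) (r := R)).subset fun x hx => ?_)
    have hside : (splitMap A x).isLeft ≠ (Sum.inr (g x) : X ⊕ X).isLeft := by
      simpa [splitMap_isLeft] using hx
    calc dist x x₀ ≤ dist (splitMap A x) (Sum.inl x₀) := (dist_splitMap_inl_bounds A x₀ x).1
      _ ≤ dist (splitMap A x) (Sum.inr (g x)) := coprodMetric_dist_inl_le hside
      _ ≤ R := dist_comm (Sum.inr (g x)) (splitMap A x) ▸ hg x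

theorem condC_of_isBounded_or_isBounded_compl {X : Type u} [MetricSpace X]
    (h : ∀ A : Set X, SlowlyOscillating (A.indicator 1) → IsBounded A ∨ IsBounded Aᶜ) :
    CondC X := by
  intro Y Z _ _ y₀ z₀ f hf
  let := coprodMetric y₀ z₀
  have hA : SlowlyOscillating ({x | (f x).isLeft}.indicator 1) := by
    refine slowlyOscillating_indicator_one_iff.2 fun R hR => ?_
    obtain ⟨S, -, hS⟩ := hf.1 R hR
    refine ⟨f ⁻¹' Metric.closedBall (Sum.inl y₀) S, hf.2 _ Metric.isBounded_closedBall,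
      fun x hx x' _ hxx' => by_contra fun hside => hx ?_⟩
    refine (coprodMetric_dist_inl_le fun heq => hside ?_).trans (hS x x' hxx')
    simp only [Set.mem_ofPred_eq, heq]
  rcases h _ hA with hA | hA
  · refine Or.inr ⟨_, hf.factor_of_eqOn_compl (isometry_inr_coprodMetric y₀ z₀)
      (g := fun x => (f x).elim (fun _ => z₀) id) hA ?_ fun x hx => ?_⟩
    · refine (isBounded_singleton (x := z₀)).subset ?_
      rintro _ ⟨x, hx, rfl⟩
      obtain ⟨a, ha⟩ := Sum.isLeft_iff.1 hx
      simp [ha]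
    · obtain ⟨b, hb⟩ := Sum.isRight_iff.1 (Sum.not_isLeft.1 hx)
      simp [hb]
  · refine Or.inl ⟨_, hf.factor_of_eqOn_compl (isometry_inl_coprodMetric y₀ z₀)
      (g := fun x => (f x).elim id fun _ => y₀) hA ?_ fun x hx => ?_⟩
    · refine (isBounded_singleton (x := y₀)).subset ?_
      rintro _ ⟨x, hx, rfl⟩
      obtain ⟨b, hb⟩ := Sum.isRight_iff.1 (Sum.not_isLeft.1 hx)
      simp [hb]
    · obtain ⟨a, ha⟩ := Sum.isLeft_iff.1 (not_not.1 hx)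
      simp [ha]

/-- `X` satisfies condition (C) iff `B_h(X)/B_0(X)` contains no non-trivial
idempotent, i.e. there is no bounded slowly oscillating `f : X → ℂ` such that `f² - f` tends
to zero at infinity while neither `f` nor `1 - f` does. (Equivalently, the Higson corona of
`X` is connected.) -/
theorem condC_iff_no_nontrivial_idempotent {X : Type u} [MetricSpace X] :
    CondC X ↔
      ¬ ∃ f : X → ℂ, IsBoundedFn f ∧ SlowlyOscillating f ∧
        TendsToZeroAtInfinity (f * f - f) ∧
        ¬ TendsToZeroAtInfinity f ∧ ¬ TendsToZeroAtInfinity (1 - f) := by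
  simp only [exists_nontrivial_idempotent_iff, not_exists, not_and, not_not, ← or_iff_not_imp_left]
  exact ⟨fun hC A => hC.isBounded_or_isBounded_compl, condC_of_isBounded_or_isBounded_compl⟩
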